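/- arXiv:2401.13626 — 2 statements merged into one kernel-verified Lean document; each statement's English description precedes it below -/
import Mathlib

section
/- If θ is a sub-multiplicative potential on Σ_* and ν is any shift-invariant Borel probability measure on Σ, then P(θ) ≥ h(ν) + Λ(θ,ν), i.e. the pressure dominates entropy plus the Lyapunov exponent of the potential. -/
/-!
Pressure, entropy and Lyapunov exponent are infima over word lengths, so it suffices to
compare them at each fixed length `n`. There the inequality is Gibbs' inequality for the
distribution `p_w = ν[w]` of `n`-prefixes against the weights `θ(w)`:
`∑ p_w log θ(w) - ∑ p_w log p_w ≤ log ∑ θ(w)`, using `log x ≤ x - 1`.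
-/

open MeasureTheory Filter Topology

/-- The prefix of length `n` of an infinite word in the shift space `{1,…,N}^ℕ`. -/
def wordPrefix {N : ℕ} (x : ℕ → Fin N) (n : ℕ) : List (Fin N) :=
  List.ofFn fun k : Fin n => x k

/-- The left shift on the full shift space. -/
def shiftMap (N : ℕ) : (ℕ → Fin N) → ℕ → Fin N := fun x n => x (n + 1)

/-- The measure of the cylinder set `[w]` as a real number. -/
noncomputable def cylMass {N : ℕ} (μ : Measure (ℕ → Fin N)) (w : List (Fin N)) : ℝ :=
  (μ {x | wordPrefix x w.length = w}).toReal

/-- The Kolmogorov–Sinai entropy `h(ν) = inf_n -(1/n) Σ_{|w|=n} ν[w] log ν[w]`. -/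
noncomputable def entropyInv {N : ℕ} (ν : Measure (ℕ → Fin N)) : ℝ :=
  ⨅ n : ℕ+, -((n : ℝ)⁻¹) * ∑ w : Fin (n : ℕ) → Fin N,
    cylMass ν (List.ofFn w) * Real.log (cylMass ν (List.ofFn w))

/-- `Λ(θ,ν) = inf_n (1/n) ∫ log θ(i|_n) dν(i)`, as an extended real number. -/
noncomputable def LyapE {N : ℕ} (θ : List (Fin N) → ℝ) (ν : Measure (ℕ → Fin N)) : EReal :=
  ⨅ n : ℕ+, (((n : ℝ)⁻¹ * ∫ x, Real.log (θ (wordPrefix x n)) ∂ν : ℝ) : EReal)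

/-- The pressure `P(θ) = inf_n (1/n) log Σ_{|w|=n} θ(w)`, as an extended real number. -/
noncomputable def pressureE {N : ℕ} (θ : List (Fin N) → ℝ) : EReal :=
  ⨅ n : ℕ+, (((n : ℝ)⁻¹ * Real.log (∑ w : Fin (n : ℕ) → Fin N, θ (List.ofFn w)) : ℝ) : EReal)

lemma mul_log_sub_mul_log_le {p c : ℝ} (hp : 0 ≤ p) (hc : 0 < c) :
    p * Real.log c - p * Real.log p ≤ c - p := by
  rcases hp.eq_or_lt with rfl | hp
  · simpa using hc.le
  calc p * Real.log c - p * Real.log p = p * Real.log (c / p) := by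
        rw [Real.log_div hc.ne' hp.ne', mul_sub]
    _ ≤ p * (c / p - 1) := by gcongr; exact Real.log_le_sub_one_of_pos (div_pos hc hp)
    _ = c - p := by field_simp

lemma sum_mul_log_sub_sum_mul_log_le_log_sum {ι : Type*} [Fintype ι] {p q : ι → ℝ}
    (hp : ∀ i, 0 ≤ p i) (hq : ∀ i, 0 < q i) (hp_sum : ∑ i, p i = 1) :
    ∑ i, p i * Real.log (q i) - ∑ i, p i * Real.log (p i) ≤ Real.log (∑ i, q i) := by
  have : Nonempty ι := by
    by_contra h
    rw [not_nonempty_iff] at h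
    simp at hp_sum
  set Q := ∑ i, q i
  have hQ : 0 < Q := Finset.sum_pos (fun i _ => hq i) Finset.univ_nonempty
  -- `mul_log_sub_mul_log_le` with `c = qᵢ / Q`; the right-hand sides sum to `1 - 1`.
  have hterm : ∀ i, p i * Real.log (q i) - p i * Real.log (p i) - p i * Real.log Q
      ≤ q i / Q - p i := fun i => by
    rw [sub_right_comm, ← mul_sub, ← Real.log_div (hq i).ne' hQ.ne']
    exact mul_log_sub_mul_log_le (hp i) (div_pos (hq i) hQ)
  have hsum := Finset.sum_le_sum fun i (_ : i ∈ Finset.univ) => hterm i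
  rw [Finset.sum_sub_distrib, Finset.sum_sub_distrib, Finset.sum_sub_distrib, ← Finset.sum_mul,
    ← Finset.sum_div, hp_sum, div_self hQ.ne'] at hsum
  linarith

section Cylinders

variable {N : ℕ} (ν : Measure (ℕ → Fin N))

def prefixMap (n : ℕ) (x : ℕ → Fin N) : Fin n → Fin N := fun k => x k

lemma measurable_prefixMap (n : ℕ) : Measurable (prefixMap (N := N) n) :=
  measurable_pi_lambda _ fun _ => measurable_pi_apply _

lemma cylMass_ofFn {n : ℕ} (w : Fin n → Fin N) :
    cylMass ν (List.ofFn w) = (ν.map (prefixMap n)).real {w} := by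
  rw [measureReal_def, Measure.map_apply (measurable_prefixMap n) (measurableSet_singleton w),
    cylMass, List.length_ofFn]
  congr 3
  ext x
  simp only [Set.mem_singleton_iff, wordPrefix, List.ofFn_inj]
  rfl

lemma integral_comp_wordPrefix [IsFiniteMeasure ν] (n : ℕ) (g : List (Fin N) → ℝ) :
    ∫ x, g (wordPrefix x n) ∂ν =
      ∑ w : Fin n → Fin N, cylMass ν (List.ofFn w) * g (List.ofFn w) := by
  calc ∫ x, g (wordPrefix x n) ∂ν = ∫ w, g (List.ofFn w) ∂(ν.map (prefixMap n)) :=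
        (integral_map (f := fun w => g (List.ofFn w)) (measurable_prefixMap n).aemeasurable
          (measurable_of_countable _).aestronglyMeasurable).symm
    _ = _ := by
        rw [integral_fintype Integrable.of_finite]
        simp only [cylMass_ofFn, smul_eq_mul]

variable [IsProbabilityMeasure ν]

lemma sum_cylMass_ofFn (n : ℕ) : ∑ w : Fin n → Fin N, cylMass ν (List.ofFn w) = 1 := by
  simpa using (integral_comp_wordPrefix ν n fun _ => 1).symm

lemma cylMass_le_one (w : List (Fin N)) : cylMass ν w ≤ 1 :=
  ENNReal.toReal_le_of_le_ofReal zero_le_one (by simpa using prob_le_one)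

lemma entropyInv_le (n : ℕ+) :
    entropyInv ν ≤ -((n : ℝ)⁻¹) * ∑ w : Fin (n : ℕ) → Fin N,
      cylMass ν (List.ofFn w) * Real.log (cylMass ν (List.ofFn w)) := by
  refine ciInf_le ⟨0, ?_⟩ n
  rintro _ ⟨m, rfl⟩
  simp only [neg_mul, ← mul_neg, ← Finset.sum_neg_distrib]
  exact mul_nonneg (by positivity) <| Finset.sum_nonneg fun w _ =>
    mul_nonneg ENNReal.toReal_nonneg
      (neg_nonneg.mpr (Real.log_nonpos ENNReal.toReal_nonneg (cylMass_le_one ν _)))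

lemma entropy_add_lyapunov_le_pressure_level {θ : List (Fin N) → ℝ} (hpos : ∀ w, 0 < θ w)
    (n : ℕ) :
    -((n : ℝ)⁻¹) * ∑ w : Fin n → Fin N,
        cylMass ν (List.ofFn w) * Real.log (cylMass ν (List.ofFn w))
      + (n : ℝ)⁻¹ * ∫ x, Real.log (θ (wordPrefix x n)) ∂ν
      ≤ (n : ℝ)⁻¹ * Real.log (∑ w : Fin n → Fin N, θ (List.ofFn w)) := by
  have hgibbs := sum_mul_log_sub_sum_mul_log_le_log_sum
    (p := fun w : Fin n → Fin N => cylMass ν (List.ofFn w)) (fun _ => ENNReal.toReal_nonneg)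
    (fun w => hpos (List.ofFn w)) (sum_cylMass_ofFn ν n)
  rw [integral_comp_wordPrefix ν n fun w => Real.log (θ w), neg_mul, neg_add_eq_sub, ← mul_sub]
  exact mul_le_mul_of_nonneg_left hgibbs (by positivity)

end Cylinders

theorem stmt_6_general {N : ℕ}
    (θ : List (Fin N) → ℝ)
    (hpos : ∀ w, 0 < θ w)
    (ν : Measure (ℕ → Fin N)) [IsProbabilityMeasure ν] :
    (entropyInv ν : EReal) + LyapE θ ν ≤ pressureE θ := by
  refine le_iInf fun n => ?_
  calc (entropyInv ν : EReal) + LyapE θ ν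
      ≤ ((-((n : ℝ)⁻¹) * ∑ w : Fin n → Fin N,
            cylMass ν (List.ofFn w) * Real.log (cylMass ν (List.ofFn w)) : ℝ) : EReal)
        + (((n : ℝ)⁻¹ * ∫ x, Real.log (θ (wordPrefix x n)) ∂ν : ℝ) : EReal) :=
        add_le_add (EReal.coe_le_coe_iff.mpr (entropyInv_le ν n)) (iInf_le _ n)
    _ ≤ _ := by
        rw [← EReal.coe_add, EReal.coe_le_coe_iff]
        exact entropy_add_lyapunov_le_pressure_level ν hpos n

/-- For a sub-multiplicative positive potential `θ` and any shift-invariant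
Borel probability measure `ν`, the pressure dominates entropy plus the Lyapunov exponent:
`P(θ) ≥ h(ν) + Λ(θ,ν)`. -/
theorem stmt_6 {N : ℕ}
    (θ : List (Fin N) → ℝ)
    (hpos : ∀ w, 0 < θ w)
    (hsub : ∀ u v : List (Fin N), θ (u ++ v) ≤ θ u * θ v)
    (ν : Measure (ℕ → Fin N)) [IsProbabilityMeasure ν]
    (hinv : MeasurePreserving (shiftMap N) ν ν) :
    (entropyInv ν : EReal) + LyapE θ ν ≤ pressureE θ :=
  stmt_6_general θ hpos ν
end

section
/- Let ν be a probability measure, T a measure-preserving ergodic transformation for a measure equivalent to ν×ν_F, and suppose d_r(x) → 1 as r ↓ 0 for (ν×ν_F)-a.e. point, where each d_r is measurable. Then for any sequence r_n ↓ 0 (uniformly over points, with r_n(i) < r_0 for n ≥ n_0), for a.e. (i,V): lim_{k→∞} (1/k) #{n ∈ {1,…,k} : |d_{r_n(i)}(T^n(i,V)) − 1| < ε} = 1 for every ε > 0. -/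
/-!
Off a set `A` of small measure, `d ρ` is `ε`-close to `1` for all `ρ < t`, with `t` uniform
(Egorov's theorem for `ρ → 0⁺`). The radii `r n ω` are eventually below `t`, so apart from finitely
many, the bad times are visits of the orbit to `A`, whose upper density is at most `μ A` by the
maximal ergodic theorem; as `μ A` is arbitrarily small, the bad times have density zero.
Since `ρ` ranges over a continuum, the exceptional sets in Egorov's theorem are projections of
measurable sets; they are null-measurable by the measurable projection theorem, which follows from
Choquet's capacitability theorem for analytic sets.
-/

open MeasureTheory Filter Topology
open scoped Classical
open Set
open scoped ENNReal Finset

section Capacitability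

lemma isCompact_setOf_forall_le (σ : ℕ → ℕ) : IsCompact {β : ℕ → ℕ | ∀ i, β i ≤ σ i} := by
  simpa [Set.pi, mem_Iic] using isCompact_univ_pi fun i => (finite_Iic (σ i)).isCompact

lemma exists_forall_lt_measure_image_le {X : Type*} [MeasurableSpace X] (μ : Measure X)
    (f : (ℕ → ℕ) → X) {c : ℝ≥0∞} (hc : c < μ (range f)) :
    ∃ σ : ℕ → ℕ, ∀ k, c < μ (f '' {β | ∀ i < k, β i ≤ σ i}) := by
  have step : ∀ (S : Set (ℕ → ℕ)) (k : ℕ), c < μ (f '' S) →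
      ∃ N, c < μ (f '' (S ∩ {β | β k ≤ N})) := by
    intro S k hS
    have hmono : Monotone fun N => f '' (S ∩ {β | β k ≤ N}) :=
      fun N M hNM => image_mono (inter_subset_inter_right _ fun β hβ => le_trans hβ hNM)
    have hunion : ⋃ N, f '' (S ∩ {β | β k ≤ N}) = f '' S := by
      rw [← image_iUnion, ← inter_iUnion]
      congr 1
      exact inter_eq_left.2 fun β _ => mem_iUnion.2 ⟨β k, le_refl (β k)⟩
    rwa [← hunion, hmono.measure_iUnion, lt_iSup_iff] at hS
  choose! N hN using step
  let S : ℕ → Set (ℕ → ℕ) := fun k => Nat.rec univ (fun k S => S ∩ {β | β k ≤ N S k}) k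
  have hS : ∀ k, c < μ (f '' S k) := by
    intro k
    induction k with
    | zero => simpa [S] using hc
    | succ k ih => exact hN _ _ ih
  refine ⟨fun k => N (S k) k, fun k => ?_⟩
  suffices h : S k = {β | ∀ i < k, β i ≤ N (S i) i} from h ▸ hS k
  induction k with
  | zero => simp [S]
  | succ k ih =>
    ext β
    simp only [S, ih, mem_inter_iff, mem_ofPred_eq, Nat.lt_succ_iff_lt_or_eq]
    grind

variable {X : Type*} [TopologicalSpace X] [T2Space X] [FirstCountableTopology X]

lemma iInter_closure_image_subset_image {f : (ℕ → ℕ) → X} (hf : Continuous f) (σ : ℕ → ℕ) :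
    ⋂ k, closure (f '' {β | ∀ i < k, β i ≤ σ i}) ⊆ f '' {β | ∀ i, β i ≤ σ i} := by
  intro x hx
  obtain ⟨V, hV⟩ := (𝓝 x).exists_antitone_basis
  have hβ : ∀ k, ∃ β, (∀ i < k, β i ≤ σ i) ∧ f β ∈ V k := fun k => by
    obtain ⟨_, hyV, β, hβ, rfl⟩ :=
      mem_closure_iff_nhds.1 (mem_iInter.1 hx k) (V k) (hV.1.mem_of_mem trivial)
    exact ⟨β, hβ, hyV⟩
  choose β hβσ hβV using hβ
  have hfβ : Tendsto (f ∘ β) atTop (𝓝 x) :=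
    hV.1.tendsto_right_iff.2 fun i _ =>
      (eventually_ge_atTop i).mono fun k hk => hV.2 hk (hβV k)
  -- Clamping `β k` into the compact box changes it only in coordinates `≥ k`.
  let clamp : (ℕ → ℕ) → ℕ → ℕ := fun β i => min (β i) (σ i)
  obtain ⟨γ, hγ, φ, hφ, hlim⟩ :=
    (isCompact_setOf_forall_le σ).tendsto_subseq (x := fun k => clamp (β k))
      fun k i => min_le_right _ _
  have hβγ : Tendsto (β ∘ φ) atTop (𝓝 γ) := by
    refine tendsto_pi_nhds.2 fun i => (tendsto_pi_nhds.1 hlim i).congr' ?_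
    filter_upwards [hφ.tendsto_atTop.eventually (eventually_gt_atTop i)] with j hj
    exact min_eq_left (hβσ _ i hj)
  exact ⟨γ, hγ, tendsto_nhds_unique ((hf.tendsto γ).comp hβγ) (hfβ.comp hφ.tendsto_atTop)⟩

variable [MeasurableSpace X] [OpensMeasurableSpace X]

theorem MeasureTheory.AnalyticSet.exists_isCompact_subset_le_measure {A : Set X}
    (hA : AnalyticSet A) (μ : Measure X) [IsFiniteMeasure μ] {c : ℝ≥0∞} (hc : c < μ A) :
    ∃ K ⊆ A, IsCompact K ∧ c ≤ μ K := by
  rw [AnalyticSet] at hA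
  rcases hA with rfl | ⟨f, hf, rfl⟩
  · simp at hc
  obtain ⟨σ, hσ⟩ := exists_forall_lt_measure_image_le μ f hc
  refine ⟨_, image_subset_range _ _, (isCompact_setOf_forall_le σ).image hf, ?_⟩
  have hanti : Antitone fun k => closure (f '' {β | ∀ i < k, β i ≤ σ i}) :=
    fun k l hkl => closure_mono (image_mono fun β hβ i hi => hβ i (hi.trans_le hkl))
  have hlim := tendsto_measure_iInter_atTop
    (fun k => isClosed_closure.measurableSet.nullMeasurableSet) hanti ⟨0, measure_ne_top μ _⟩
  calc c ≤ μ (⋂ k, closure (f '' {β | ∀ i < k, β i ≤ σ i})) :=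
        ge_of_tendsto hlim (Eventually.of_forall fun k =>
          (hσ k).le.trans (measure_mono subset_closure))
    _ ≤ _ := measure_mono (iInter_closure_image_subset_image hf σ)

theorem MeasureTheory.AnalyticSet.nullMeasurableSet {A : Set X} (hA : AnalyticSet A)
    (μ : Measure X) [IsFiniteMeasure μ] : NullMeasurableSet A μ := by
  rcases eq_zero_or_pos (μ A) with h0 | hpos
  · exact NullMeasurableSet.of_null h0
  obtain ⟨u, -, hu, hlim⟩ := exists_seq_strictMono_tendsto' hpos
  choose K hKA hK hμK using fun n => hA.exists_isCompact_subset_le_measure μ (hu n).2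
  have hFA : ⋃ n, K n ⊆ A := iUnion_subset hKA
  have hF : MeasurableSet (⋃ n, K n) := .iUnion fun n => (hK n).measurableSet
  have hμF : μ A ≤ μ (⋃ n, K n) :=
    le_of_tendsto' hlim fun n => (hμK n).trans (measure_mono (subset_iUnion K n))
  refine hF.nullMeasurableSet.congr (ae_eq_set.2 ⟨by simp [sdiff_eq_empty.2 hFA], ?_⟩)
  rw [measure_sdiff hFA hF.nullMeasurableSet (measure_ne_top μ _)]
  exact tsub_eq_zero_of_le hμF

end Capacitability

/-- Only countably many measurable subsets of `β` enter the construction of a measurable subset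
of `α × β`; recording membership in them maps `β` to the Cantor space. -/
theorem MeasurableSet.exists_preimage_prodMap_cantor {α β : Type*} [MeasurableSpace α]
    [MeasurableSpace β] {D : Set (α × β)} (hD : MeasurableSet D) :
    ∃ π : β → ℕ → Bool, Measurable π ∧
      ∃ D' : Set (α × (ℕ → Bool)), MeasurableSet D' ∧ Prod.map id π ⁻¹' D' = D := by
  rw [← generateFrom_prod] at hD
  induction D, hD using MeasurableSpace.generateFrom_induction with
  | hC _ hst =>
    obtain ⟨s, hs, t, ht, rfl⟩ := hst
    refine ⟨fun y _ => decide (y ∈ t), measurable_pi_lambda _ fun _ =>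
      measurable_to_bool (by simpa [preimage] using ht), s ×ˢ ((· 0) ⁻¹' {true}),
      hs.prod (measurable_pi_apply 0 (measurableSet_singleton true)), ?_⟩
    ext ⟨x, y⟩
    simp
  | empty => exact ⟨fun _ _ => true, measurable_const, ∅, .empty, rfl⟩
  | compl _ _ ih =>
    obtain ⟨π, hπ, D', hD', rfl⟩ := ih
    exact ⟨π, hπ, D'ᶜ, hD'.compl, rfl⟩
  | iUnion _ _ ih =>
    choose π hπ D' hD' hD using ih
    let select : ℕ → (ℕ → Bool) → ℕ → Bool := fun n b j => b (Nat.pair n j)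
    have hselect : ∀ n, Measurable (select n) := fun n =>
      measurable_pi_lambda _ fun j => measurable_pi_apply _
    refine ⟨fun y k => π k.unpair.1 y k.unpair.2,
      measurable_pi_lambda _ fun k => measurable_pi_apply _ |>.comp (hπ _),
      ⋃ n, Prod.map id (select n) ⁻¹' D' n,
      .iUnion fun n => measurable_id.prodMap (hselect n) (hD' n), ?_⟩
    simp only [preimage_iUnion, ← hD]
    refine iUnion_congr fun n => ?_
    ext ⟨x, y⟩
    simp [select]

theorem MeasurableSet.nullMeasurableSet_image_snd {α Ω : Type*} [MeasurableSpace α]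
    [StandardBorelSpace α] [MeasurableSpace Ω] {D : Set (α × Ω)} (hD : MeasurableSet D)
    (μ : Measure Ω) [IsFiniteMeasure μ] : NullMeasurableSet (Prod.snd '' D) μ := by
  obtain ⟨π, hπ, D', hD', rfl⟩ := hD.exists_preimage_prodMap_cantor
  have hproj : Prod.snd '' (Prod.map id π ⁻¹' D') = π ⁻¹' (Prod.snd '' D') := by
    ext y
    simp
  rw [hproj]
  exact ((hD'.analyticSet_image measurable_snd).nullMeasurableSet _).preimage
    (hπ.quasiMeasurePreserving μ)

theorem exists_measure_lt_forall_mem_Ioo_notMem {Ω : Type*} [MeasurableSpace Ω]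
    {μ : Measure Ω} [IsFiniteMeasure μ] {D : Set (ℝ × Ω)} (hD : MeasurableSet D)
    (h : ∀ᵐ x ∂μ, ∀ᶠ ρ in 𝓝[>] 0, (ρ, x) ∉ D) {κ : ℝ≥0∞} (hκ : 0 < κ) :
    ∃ A, MeasurableSet A ∧ μ A < κ ∧ ∃ t > 0, ∀ x ∉ A, ∀ ρ ∈ Ioo 0 t, (ρ, x) ∉ D := by
  let B : ℕ → Set Ω := fun n => Prod.snd '' (D ∩ Ioo 0 (1 / ((n : ℝ) + 1)) ×ˢ univ)
  have hB : ∀ n, NullMeasurableSet (B n) μ := fun n =>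
    (hD.inter (measurableSet_Ioo.prod .univ)).nullMeasurableSet_image_snd μ
  have hanti : Antitone B := fun n m hnm => image_mono <| inter_subset_inter_right _ <|
    prod_mono (Ioo_subset_Ioo_right (Nat.one_div_le_one_div hnm)) subset_rfl
  have hnull : μ (⋂ n, B n) = 0 := by
    refine measure_mono_null (fun x hx => ?_) (ae_iff.1 h)
    intro hx'
    obtain ⟨t, ht, hgood⟩ := mem_nhdsGT_iff_exists_Ioo_subset.1 hx'
    obtain ⟨n, hn⟩ := exists_nat_one_div_lt (mem_Ioi.1 ht)
    obtain ⟨⟨ρ, y⟩, ⟨hρD, hρ, -⟩, rfl⟩ := mem_iInter.1 hx n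
    exact hgood ⟨hρ.1, hρ.2.trans hn⟩ hρD
  have hlim := tendsto_measure_iInter_atTop hB hanti ⟨0, measure_ne_top μ _⟩
  rw [hnull] at hlim
  obtain ⟨n, hn⟩ := (hlim.eventually (gt_mem_nhds hκ)).exists
  refine ⟨toMeasurable μ (B n), measurableSet_toMeasurable _ _,
    (measure_toMeasurable _).trans_lt hn, 1 / ((n : ℝ) + 1), Nat.one_div_pos_of_nat, ?_⟩
  intro x hx ρ hρ hρD
  exact hx (subset_toMeasurable _ _ ⟨(ρ, x), ⟨hρD, hρ, trivial⟩, rfl⟩)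

section MaximalErgodic

variable {α : Type*} (f : α → α) (g : α → ℝ)

noncomputable def birkhoffMax (n : ℕ) (x : α) : ℝ :=
  (Finset.range (n + 1)).sup' Finset.nonempty_range_add_one fun k => birkhoffSum f g k x

variable {f g}

lemma birkhoffSum_le_birkhoffMax {k n : ℕ} (hk : k ≤ n) (x : α) :
    birkhoffSum f g k x ≤ birkhoffMax f g n x :=
  Finset.le_sup' (fun k => birkhoffSum f g k x) (Finset.mem_range.2 (Nat.lt_succ_of_le hk))

lemma birkhoffMax_nonneg (n : ℕ) (x : α) : 0 ≤ birkhoffMax f g n x := by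
  simpa using birkhoffSum_le_birkhoffMax (g := g) (f := f) n.zero_le x

lemma monotone_birkhoffMax (x : α) : Monotone fun n => birkhoffMax f g n x :=
  fun _ _ hnm => Finset.sup'_mono _ (Finset.range_subset_range.2 (Nat.succ_le_succ hnm)) _

lemma birkhoffMax_le_add_birkhoffMax_apply {n : ℕ} {x : α} (hx : 0 < birkhoffMax f g n x) :
    birkhoffMax f g n x ≤ g x + birkhoffMax f g n (f x) := by
  obtain ⟨k, hk, hkx⟩ := Finset.exists_mem_eq_sup' Finset.nonempty_range_add_one
    fun k => birkhoffSum f g k x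
  rw [birkhoffMax, hkx] at hx ⊢
  cases k with
  | zero => simp at hx
  | succ j =>
    rw [birkhoffSum_succ']
    gcongr
    exact birkhoffSum_le_birkhoffMax (by simp at hk; omega) _

lemma exists_birkhoffMax_pos_iff {x : α} :
    (∃ n, 0 < birkhoffMax f g n x) ↔ ∃ k, 0 < birkhoffSum f g k x := by
  refine ⟨fun ⟨n, hn⟩ => ?_, fun ⟨k, hk⟩ =>
    ⟨k, hk.trans_le (birkhoffSum_le_birkhoffMax le_rfl x)⟩⟩
  obtain ⟨k, -, hkx⟩ := Finset.exists_mem_eq_sup' Finset.nonempty_range_add_one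
    fun k => birkhoffSum f g k x
  exact ⟨k, hkx ▸ hn⟩

variable [MeasurableSpace α] {μ : Measure α}

lemma measurable_birkhoffSum (hf : Measurable f) (hg : Measurable g) (k : ℕ) :
    Measurable (birkhoffSum f g k) :=
  Finset.measurable_sum _ fun i _ => hg.comp (hf.iterate i)

lemma measurable_birkhoffMax (hf : Measurable f) (hg : Measurable g) (n : ℕ) :
    Measurable (birkhoffMax f g n) := by
  have h : birkhoffMax f g n = (Finset.range (n + 1)).sup' Finset.nonempty_range_add_one
      (birkhoffSum f g) := funext fun x => (Finset.sup'_apply _ _ x).symm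
  exact h ▸ Finset.measurable_sup' _ fun k _ => measurable_birkhoffSum hf hg k

lemma MeasureTheory.MeasurePreserving.integrable_birkhoffMax (hf : MeasurePreserving f μ μ)
    (hg : Measurable g) (hgi : Integrable g μ) (n : ℕ) : Integrable (birkhoffMax f g n) μ := by
  have hsum : Integrable (fun x => ∑ k ∈ Finset.range (n + 1), |birkhoffSum f g k x|) μ :=
    integrable_finsetSum _ fun k _ => (integrable_finsetSum _ fun i _ =>
      (hf.iterate i).integrable_comp_of_integrable hgi).abs
  refine hsum.mono' (measurable_birkhoffMax hf.measurable hg n).aestronglyMeasurable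
    (Eventually.of_forall fun x => ?_)
  rw [Real.norm_of_nonneg (birkhoffMax_nonneg n x)]
  refine Finset.sup'_le _ _ fun k hk => (le_abs_self _).trans ?_
  exact Finset.single_le_sum (f := fun k => |birkhoffSum f g k x|) (fun _ _ => abs_nonneg _) hk

/-- Garsia's inequality: on `{0 < birkhoffMax f g n}` the function `g` dominates
`birkhoffMax f g n - birkhoffMax f g n ∘ f`, whose integral is `0`. -/
lemma MeasureTheory.MeasurePreserving.setIntegral_birkhoffMax_pos_nonneg
    (hf : MeasurePreserving f μ μ) (hg : Measurable g) (hgi : Integrable g μ) (n : ℕ) :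
    0 ≤ ∫ x in {x | 0 < birkhoffMax f g n x}, g x ∂μ := by
  set M := birkhoffMax f g n
  have hM := hf.integrable_birkhoffMax hg hgi n
  have hMf : Integrable (M ∘ f) μ := hf.integrable_comp_of_integrable hM
  have hE : MeasurableSet {x | 0 < M x} :=
    measurableSet_lt measurable_const (measurable_birkhoffMax hf.measurable hg n)
  have hcomp : ∫ x, M (f x) ∂μ = ∫ x, M x ∂μ := by
    rw [← integral_map hf.measurable.aemeasurable
      (measurable_birkhoffMax hf.measurable hg n).aestronglyMeasurable, hf.map_eq]
  have hoff : ∫ x in {x | 0 < M x}, M x ∂μ = ∫ x, M x ∂μ :=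
    setIntegral_eq_integral_of_forall_compl_eq_zero fun x hx =>
      le_antisymm (not_lt.1 hx) (birkhoffMax_nonneg n x)
  calc (0 : ℝ) = ∫ x, M x ∂μ - ∫ x, M (f x) ∂μ := by rw [hcomp, sub_self]
    _ ≤ ∫ x in {x | 0 < M x}, M x ∂μ - ∫ x in {x | 0 < M x}, M (f x) ∂μ := by
      rw [hoff]
      exact sub_le_sub_left (setIntegral_le_integral hMf
        (Eventually.of_forall fun x => birkhoffMax_nonneg n (f x))) _
    _ = ∫ x in {x | 0 < M x}, (M x - M (f x)) ∂μ :=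
      (integral_sub hM.integrableOn hMf.integrableOn).symm
    _ ≤ ∫ x in {x | 0 < M x}, g x ∂μ :=
      setIntegral_mono_on (hM.sub hMf).integrableOn hgi.integrableOn hE fun x hx => by
        linarith [birkhoffMax_le_add_birkhoffMax_apply hx]

theorem MeasureTheory.MeasurePreserving.setIntegral_exists_birkhoffSum_pos_nonneg
    (hf : MeasurePreserving f μ μ) (hg : Measurable g) (hgi : Integrable g μ) :
    0 ≤ ∫ x in {x | ∃ k, 0 < birkhoffSum f g k x}, g x ∂μ := by
  have hunion : ⋃ n, {x | 0 < birkhoffMax f g n x} = {x | ∃ k, 0 < birkhoffSum f g k x} := by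
    ext x
    simp only [mem_iUnion, mem_ofPred_eq, exists_birkhoffMax_pos_iff]
  rw [← hunion]
  have hmono : Monotone fun n => {x | 0 < birkhoffMax f g n x} :=
    fun n m hnm x hx => hx.trans_le (monotone_birkhoffMax x hnm)
  exact ge_of_tendsto (tendsto_setIntegral_of_monotone (fun n => measurableSet_lt
    measurable_const (measurable_birkhoffMax hf.measurable hg n)) hmono hgi.integrableOn)
    (Eventually.of_forall (hf.setIntegral_birkhoffMax_pos_nonneg hg hgi))

end MaximalErgodic

section Ergodic

variable {α : Type*} {f : α → α} {g : α → ℝ}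

lemma bddAbove_birkhoffSum_apply_iff {x : α} :
    BddAbove (range fun k => birkhoffSum f g k (f x)) ↔
      BddAbove (range fun k => birkhoffSum f g k x) := by
  simp only [bddAbove_def, forall_mem_range]
  constructor
  · rintro ⟨M, hM⟩
    refine ⟨max 0 (g x + M), fun k => ?_⟩
    cases k with
    | zero => simp
    | succ k =>
      rw [birkhoffSum_succ']
      exact (add_le_add_right (hM k) _).trans (le_max_right _ _)
  · rintro ⟨M, hM⟩
    refine ⟨M - g x, fun k => ?_⟩
    have := birkhoffSum_succ' f g k x ▸ hM (k + 1)
    linarith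

lemma birkhoffSum_indicator_sub_const (A : Set α) (c : ℝ) (k : ℕ) (x : α) :
    birkhoffSum f (fun y => A.indicator (fun _ => 1) y - c) k x =
      #{n ∈ Finset.range k | f^[n] x ∈ A} - c * k := by
  simp [birkhoffSum, Finset.sum_sub_distrib, indicator_apply, mul_comm]

variable [MeasurableSpace α] {μ : Measure α} [IsProbabilityMeasure μ]

/-- The set where the Birkhoff sums are unbounded above is invariant, hence null or conull;
if it were conull, the maximal ergodic theorem would give `0 ≤ ∫ g`. -/
theorem Ergodic.ae_bddAbove_birkhoffSum (hf : Ergodic f μ) (hg : Measurable g)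
    (hgi : Integrable g μ) (hneg : ∫ x, g x ∂μ < 0) :
    ∀ᵐ x ∂μ, BddAbove (range fun k => birkhoffSum f g k x) := by
  set I := {x | BddAbove (range fun k => birkhoffSum f g k x)}
  have hI : MeasurableSet I :=
    measurableSet_bddAbove_range (measurable_birkhoffSum hf.measurable hg)
  have hinv : f ⁻¹' I = I := by
    ext x
    exact bddAbove_birkhoffSum_apply_iff
  rcases hf.prob_eq_zero_or_one hI hinv with h0 | h1
  · have hpos : ∀ᵐ x ∂μ, x ∈ {x | ∃ k, 0 < birkhoffSum f g k x} := by
      filter_upwards [measure_eq_zero_iff_ae_notMem.1 h0] with x hx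
      by_contra! hle
      exact hx ⟨0, forall_mem_range.2 fun k => hle k⟩
    have := hf.toMeasurePreserving.setIntegral_exists_birkhoffSum_pos_nonneg hg hgi
    rw [Measure.restrict_eq_self_of_ae_mem hpos] at this
    linarith
  · exact mem_ae_iff.2 ((prob_compl_eq_zero_iff hI).2 h1)

theorem Ergodic.ae_exists_card_filter_mem_le (hf : Ergodic f μ) {A : Set α}
    (hA : MeasurableSet A) {c : ℝ} (hc : μ.real A < c) :
    ∀ᵐ x ∂μ, ∃ C, ∀ k, (#{n ∈ Finset.range k | f^[n] x ∈ A} : ℝ) ≤ c * k + C := by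
  have hint : ∫ x, (A.indicator (fun _ => 1) x - c) ∂μ < 0 := by
    rw [integral_sub ((integrable_const 1).indicator hA) (integrable_const c),
      integral_indicator_const 1 hA]
    simpa using hc
  filter_upwards [hf.ae_bddAbove_birkhoffSum
    ((measurable_const.indicator hA).sub measurable_const)
    (((integrable_const 1).indicator hA).sub (integrable_const c)) hint] with x ⟨C, hC⟩
  refine ⟨C, fun k => ?_⟩
  have := birkhoffSum_indicator_sub_const (f := f) A c k x ▸ hC (mem_range_self k)
  linarith

end Ergodic

lemma MeasureTheory.ae_forall_pos_of_monotone {Ω : Type*} [MeasurableSpace Ω] {μ : Measure Ω}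
    {P : ℝ → Ω → Prop} (hP : ∀ ω, Monotone fun ε => P ε ω) (h : ∀ ε > 0, ∀ᵐ ω ∂μ, P ε ω) :
    ∀ᵐ ω ∂μ, ∀ ε > 0, P ε ω := by
  filter_upwards [ae_all_iff.2 fun n : ℕ => h (1 / (n + 1)) Nat.one_div_pos_of_nat]
    with ω hω ε hε
  obtain ⟨n, hn⟩ := exists_nat_one_div_lt hε
  exact hP ω hn.le (hω n)

lemma tendsto_inv_mul_card_filter_Icc {p : ℕ → Prop} [DecidablePred p]
    (h : ∀ δ > 0, ∃ C, ∀ k : ℕ, (#{n ∈ Finset.Icc 1 k | ¬ p n} : ℝ) ≤ δ * k + C) :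
    Tendsto (fun k : ℕ => (k : ℝ)⁻¹ * #{n ∈ Finset.Icc 1 k | p n}) atTop (𝓝 1) := by
  have hbad : Tendsto (fun k : ℕ => (k : ℝ)⁻¹ * #{n ∈ Finset.Icc 1 k | ¬ p n}) atTop (𝓝 0) := by
    refine tendsto_order.2 ⟨fun a ha => Eventually.of_forall fun k =>
      ha.trans_le (by positivity), fun a ha => ?_⟩
    obtain ⟨C, hC⟩ := h (a / 2) (half_pos ha)
    filter_upwards [(tendsto_const_div_atTop_nhds_zero_nat C).eventually
      (gt_mem_nhds (half_pos ha)), eventually_gt_atTop 0] with k hCk hk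
    have hk' : (0 : ℝ) < k := Nat.cast_pos.2 hk
    calc (k : ℝ)⁻¹ * #{n ∈ Finset.Icc 1 k | ¬ p n} ≤ (k : ℝ)⁻¹ * (a / 2 * k + C) := by
          gcongr
          exact hC k
      _ = a / 2 + C / k := by field_simp
      _ < a := by linarith
  have hgood :
      Tendsto (fun k : ℕ => 1 - (k : ℝ)⁻¹ * #{n ∈ Finset.Icc 1 k | ¬ p n}) atTop (𝓝 1) := by
    simpa using (tendsto_const_nhds (x := (1 : ℝ))).sub hbad
  refine hgood.congr' ?_
  filter_upwards [eventually_gt_atTop 0] with k hk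
  have hcard : (#{n ∈ Finset.Icc 1 k | p n} : ℝ) + #{n ∈ Finset.Icc 1 k | ¬ p n} = k := by
    exact_mod_cast
      (Finset.card_filter_add_card_filter_not (s := Finset.Icc 1 k) (p := p)).trans (by simp)
  field_simp
  linarith

theorem Ergodic.ae_forall_pos_exists_card_filter_Icc_le {Ω : Type*} [MeasurableSpace Ω]
    {μ : Measure Ω} [IsProbabilityMeasure μ] {T : Ω → Ω} (hT : Ergodic T μ)
    {D : Set (ℝ × Ω)} (hD : MeasurableSet D) (hgood : ∀ᵐ x ∂μ, ∀ᶠ ρ in 𝓝[>] 0, (ρ, x) ∉ D)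
    {r : ℕ → Ω → ℝ} (hrpos : ∀ n ω, 0 < r n ω)
    (hrunif : ∀ r0 > (0 : ℝ), ∃ n0 : ℕ, ∀ n ≥ n0, ∀ ω, r n ω < r0) :
    ∀ᵐ ω ∂μ, ∀ δ > 0, ∃ C, ∀ k : ℕ,
      (#{n ∈ Finset.Icc 1 k | (r n ω, T^[n] ω) ∈ D} : ℝ) ≤ δ * k + C := by
  refine ae_forall_pos_of_monotone (fun ω δ δ' hδ ⟨C, hC⟩ => ⟨C, fun k => ?_⟩) fun δ hδ => ?_
  · have := hC k
    have : δ * k ≤ δ' * k := by gcongr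
    linarith
  obtain ⟨A, hA, hAμ, t, ht, hAt⟩ :=
    exists_measure_lt_forall_mem_Ioo_notMem hD hgood (ENNReal.ofReal_pos.2 hδ)
  obtain ⟨n0, hn0⟩ := hrunif t ht
  have hAδ : μ.real A < δ := (ENNReal.lt_ofReal_iff_toReal_lt (measure_ne_top _ _)).1 hAμ
  filter_upwards [hT.ae_exists_card_filter_mem_le hA hAδ] with ω ⟨C, hC⟩
  refine ⟨n0 + δ + C, fun k => ?_⟩
  have hsub : {n ∈ Finset.Icc 1 k | (r n ω, T^[n] ω) ∈ D} ⊆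
      Finset.range n0 ∪ {n ∈ Finset.range (k + 1) | T^[n] ω ∈ A} := by
    intro n hn
    simp only [Finset.mem_filter, Finset.mem_Icc] at hn
    simp only [Finset.mem_union, Finset.mem_range, Finset.mem_filter]
    by_contra! h
    exact hAt _ (h.2 (by omega)) _ ⟨hrpos n ω, hn0 n h.1 ω⟩ hn.2
  calc (#{n ∈ Finset.Icc 1 k | (r n ω, T^[n] ω) ∈ D} : ℝ)
      ≤ n0 + #{n ∈ Finset.range (k + 1) | T^[n] ω ∈ A} := by
        exact_mod_cast (Finset.card_le_card hsub).trans
          ((Finset.card_union_le _ _).trans_eq (by rw [Finset.card_range]))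
    _ ≤ n0 + (δ * (k + 1 : ℕ) + C) := by gcongr; exact hC (k + 1)
    _ = δ * k + (n0 + δ + C) := by push_cast; ring

theorem stmt_19_general {Ω : Type*} [MeasurableSpace Ω]
    (m m' : Measure Ω) [IsProbabilityMeasure m']
    (heqv : m ≪ m' ∧ m' ≪ m)
    (T : Ω → Ω) (hT : Ergodic T m')
    (d : ℝ → Ω → ℝ) (hd : Measurable (Function.uncurry d))
    (hconv : ∀ᵐ ω ∂m, Tendsto (fun r => d r ω) (𝓝[>] (0 : ℝ)) (𝓝 1))
    (r : ℕ → Ω → ℝ) (hrpos : ∀ n ω, 0 < r n ω)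
    (hrunif : ∀ r0 > (0 : ℝ), ∃ n0 : ℕ, ∀ n ≥ n0, ∀ ω, r n ω < r0) :
    ∀ᵐ ω ∂m, ∀ ε > (0 : ℝ),
      Tendsto
        (fun k : ℕ => (k : ℝ)⁻¹ *
          ((Finset.Icc 1 k).filter
            (fun n => |d (r n ω) (T^[n] ω) - 1| < ε)).card)
        atTop (𝓝 1) := by
  refine heqv.1.ae_le ?_
  have hbad : ∀ ε > 0, ∀ᵐ ω ∂m', ∀ δ > 0, ∃ C, ∀ k : ℕ,
      (#{n ∈ Finset.Icc 1 k | ¬ |d (r n ω) (T^[n] ω) - 1| < ε} : ℝ) ≤ δ * k + C := by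
    intro ε hε
    have hD : MeasurableSet {p : ℝ × Ω | ¬ |d p.1 p.2 - 1| < ε} :=
      (measurableSet_lt (hd.sub measurable_const).abs measurable_const).compl
    have hgood :
        ∀ᵐ x ∂m', ∀ᶠ ρ in 𝓝[>] 0, (ρ, x) ∉ {p : ℝ × Ω | ¬ |d p.1 p.2 - 1| < ε} := by
      filter_upwards [heqv.2.ae_le hconv] with ω hω
      filter_upwards [hω.eventually (Metric.ball_mem_nhds 1 hε)] with ρ hρ
      simpa [Real.dist_eq] using hρ
    filter_upwards [hT.ae_forall_pos_exists_card_filter_Icc_le hD hgood hrpos hrunif]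
      with ω hω δ hδ
    obtain ⟨C, hC⟩ := hω δ hδ
    exact ⟨C, fun k => by convert hC k using 4⟩
  refine (ae_forall_pos_of_monotone (fun ω ε ε' hε h δ hδ => ?_) hbad).mono
    fun ω hω ε hε => tendsto_inv_mul_card_filter_Icc (hω ε hε)
  obtain ⟨C, hC⟩ := h δ hδ
  refine ⟨C, fun k => le_trans ?_ (hC k)⟩
  refine Nat.cast_le.2 (Finset.card_le_card fun n hn => ?_)
  simp only [Finset.mem_filter] at hn ⊢
  exact ⟨hn.1, fun hlt => hn.2 (hlt.trans_le hε)⟩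

/-- Let `m` be a probability measure (playing the role of `ν × ν_F`) and
`T` a transformation which is measure-preserving and ergodic for a probability measure `m'`
equivalent to `m`. Suppose `d_r → 1` as `r ↓ 0` at `m`-a.e. point, where
`d : ℝ → Ω → ℝ` is jointly measurable, and let `r_n : Ω → ℝ` be positive and tend to `0`
uniformly over points. Then for `m`-a.e. `ω`, for every `ε > 0`, the set of times
`n ∈ {1,…,k}` with `|d_{r_n(ω)}(T^n ω) − 1| < ε` has asymptotic density one. -/
theorem stmt_19 {Ω : Type*} [MeasurableSpace Ω]
    (m m' : Measure Ω) [IsProbabilityMeasure m] [IsProbabilityMeasure m']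
    (heqv : m ≪ m' ∧ m' ≪ m)
    (T : Ω → Ω) (hT : Ergodic T m')
    (d : ℝ → Ω → ℝ) (hd : Measurable (Function.uncurry d))
    (hconv : ∀ᵐ ω ∂m, Tendsto (fun r => d r ω) (𝓝[>] (0 : ℝ)) (𝓝 1))
    (r : ℕ → Ω → ℝ) (hrpos : ∀ n ω, 0 < r n ω)
    (hrunif : ∀ r0 > (0 : ℝ), ∃ n0 : ℕ, ∀ n ≥ n0, ∀ ω, r n ω < r0) :
    ∀ᵐ ω ∂m, ∀ ε > (0 : ℝ),
      Tendsto
        (fun k : ℕ => (k : ℝ)⁻¹ *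
          ((Finset.Icc 1 k).filter
            (fun n => |d (r n ω) (T^[n] ω) - 1| < ε)).card)
        atTop (𝓝 1) :=
  stmt_19_general m m' heqv T hT d hd hconv r hrpos hrunif
end
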